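/- arXiv:1006.1050 — 3 statements merged into one kernel-verified Lean document; each statement's English description precedes it below -/
import Mathlib

section
/- For the formal group law F(x,y) = x + y - v*x*y over Z[v], a prime p and any n ≥ 1, the p^n-series satisfies [p^n](x) ≡ v^{p^n - 1} * x^{p^n} modulo the ideal (p) of Z[v][[x]]. -/
open PowerSeries

/-- The formal group law `F(x,y) = x + y - v*x*y` on power series over `ℤ[v]`. -/
noncomputable def F (a b : PowerSeries (Polynomial ℤ)) : PowerSeries (Polynomial ℤ) :=
  a + b - PowerSeries.C (R := Polynomial ℤ) Polynomial.X * a * b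

/-- The `m`-series of `F`: `[0](x) = 0`, `[m+1](x) = F([m](x), x)`. -/
noncomputable def mser : ℕ → PowerSeries (Polynomial ℤ)
  | 0 => 0
  | m + 1 => F (mser m) PowerSeries.X

lemma mser_key (m : ℕ) :
    PowerSeries.C (R := Polynomial ℤ) Polynomial.X * mser m
      = 1 - (1 - PowerSeries.C (R := Polynomial ℤ) Polynomial.X * PowerSeries.X) ^ m := by
  induction m with
  | zero => simp [mser]
  | succ m ih =>
    rw [mser, F, pow_succ]
    linear_combination (1 - PowerSeries.C (R := Polynomial ℤ) Polynomial.X * PowerSeries.X) * ih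

theorem pn_series_mod_p (p n : ℕ) (hp : p.Prime) (hn : 1 ≤ n) :
    mser (p ^ n)
      - PowerSeries.C (R := Polynomial ℤ) (Polynomial.X ^ (p ^ n - 1)) * PowerSeries.X ^ (p ^ n)
      ∈ Ideal.span {(p : PowerSeries (Polynomial ℤ))} := by
  haveI : Fact p.Prime := ⟨hp⟩
  set f : Polynomial ℤ →+* Polynomial (ZMod p) :=
    Polynomial.mapRingHom (Int.castRingHom (ZMod p)) with hf
  set φ : PowerSeries (Polynomial ℤ) →+* PowerSeries (Polynomial (ZMod p)) :=
    PowerSeries.map f with hφ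
  -- key: the image of the LHS under φ is 0
  haveI : CharP (PowerSeries (Polynomial (ZMod p))) p :=
    charP_of_injective_ringHom (PowerSeries.C_injective) p
  set v : Polynomial (ZMod p) := Polynomial.X with hv
  have hCv : φ (PowerSeries.C (R := Polynomial ℤ) Polynomial.X)
      = PowerSeries.C (R := Polynomial (ZMod p)) v := by
    simp [hφ, hf, hv]
  have hX : φ PowerSeries.X = PowerSeries.X := PowerSeries.map_X f
  have hmap : PowerSeries.C (R := Polynomial (ZMod p)) v * φ (mser (p ^ n))
      = 1 - (1 - PowerSeries.C (R := Polynomial (ZMod p)) v * PowerSeries.X) ^ (p ^ n) := by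
    have := congrArg φ (mser_key (p ^ n))
    rw [map_sub, map_one, map_mul, map_pow, map_sub, map_one, map_mul, hCv, hX] at this
    exact this
  rw [sub_pow_char_pow, one_pow, sub_sub_cancel, mul_pow, ← map_pow] at hmap
  -- write v^(p^n) = v * v^(p^n - 1)
  have h1 : p ^ n - 1 + 1 = p ^ n := by
    have : 1 ≤ p ^ n := Nat.one_le_pow _ _ hp.pos
    omega
  have hvpow : v ^ (p ^ n) = v * v ^ (p ^ n - 1) := by
    conv_lhs => rw [← h1, pow_succ']
  have hmap2 : PowerSeries.C (R := Polynomial (ZMod p)) v * φ (mser (p ^ n))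
      = PowerSeries.C (R := Polynomial (ZMod p)) v *
        (PowerSeries.C (R := Polynomial (ZMod p)) (v ^ (p ^ n - 1)) * PowerSeries.X ^ (p ^ n)) := by
    rw [hmap, hvpow, map_mul]
    ring
  have hvne : (PowerSeries.C (R := Polynomial (ZMod p)) v) ≠ 0 := by
    intro h
    have := congrArg (PowerSeries.constantCoeff (R := Polynomial (ZMod p))) h
    simpa [hv] using this
  have hmser : φ (mser (p ^ n))
      = PowerSeries.C (R := Polynomial (ZMod p)) (v ^ (p ^ n - 1)) * PowerSeries.X ^ (p ^ n) :=
    mul_left_cancel₀ hvne hmap2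
  have hzero : φ (mser (p ^ n)
      - PowerSeries.C (R := Polynomial ℤ) (Polynomial.X ^ (p ^ n - 1)) * PowerSeries.X ^ (p ^ n)) = 0 := by
    rw [map_sub, map_mul, map_pow, hmser]
    simp [hφ, hf, hv]
  -- now deduce membership in (p)
  rw [Ideal.mem_span_singleton]
  set a := mser (p ^ n)
      - PowerSeries.C (R := Polynomial ℤ) (Polynomial.X ^ (p ^ n - 1)) * PowerSeries.X ^ (p ^ n) with ha
  have hcoeff : ∀ i : ℕ, ∃ d : Polynomial ℤ, PowerSeries.coeff i a = (p : Polynomial ℤ) * d := by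
    intro i
    have h0 : Polynomial.map (Int.castRingHom (ZMod p)) (PowerSeries.coeff i a) = 0 := by
      have := congrArg (PowerSeries.coeff i) hzero
      simpa [hφ, hf, PowerSeries.coeff_map] using this
    have hdvd : (Polynomial.C (p : ℤ)) ∣ PowerSeries.coeff i a := by
      rw [Polynomial.C_dvd_iff_dvd_coeff]
      intro j
      have := congrArg (fun q => Polynomial.coeff q j) h0
      simp only [Polynomial.coeff_map, Polynomial.coeff_zero] at this
      exact_mod_cast (ZMod.intCast_zmod_eq_zero_iff_dvd _ p).mp this
    obtain ⟨d, hd⟩ := hdvd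
    exact ⟨d, by simpa using hd⟩
  refine ⟨PowerSeries.mk fun i => Classical.choose (hcoeff i), ?_⟩
  refine PowerSeries.ext fun i => ?_
  have := Classical.choose_spec (hcoeff i)
  have hpC : (p : PowerSeries (Polynomial ℤ)) = PowerSeries.C (R := Polynomial ℤ) (p : Polynomial ℤ) := by
    simp
  rw [hpC, PowerSeries.coeff_C_mul, PowerSeries.coeff_mk]
  exact this
end

section
/- Let R be a commutative ring, let a_0, a_1, ..., a_{N-1} ∈ R, let F = ⊕_{j≥1} R·e_j be the free R-module on generators e_j (j ≥ 1), and let M = F / S where S is the submodule generated by the elements Σ_{k=0}^{N-1} a_k e_{j-k} for j ≥ 1 (with the convention e_h = 0 for h ≤ 0). If a_0 = p^n and p^n divides a_k in R for all 0 ≤ k < c, then p^n · e_b = 0 in M for all 1 ≤ b ≤ c. -/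
/-- The generator `e_h` of the free module `⊕_{j ≥ 1} R e_j ⊆ ℕ →₀ R`,
with the convention `e_h = 0` for `h ≤ 0` (here `h = 0`). -/
noncomputable def e (R : Type*) [CommRing R] (h : ℕ) : ℕ →₀ R :=
  if h = 0 then 0 else Finsupp.single h 1

/-- The submodule `S` generated by the relations `∑_{k=0}^{N-1} a_k e_{j-k}` for `j ≥ 1`. -/
noncomputable def relSub (R : Type*) [CommRing R] (N : ℕ) (a : ℕ → R) :
    Submodule R (ℕ →₀ R) :=
  Submodule.span R {f | ∃ j, 1 ≤ j ∧ f = ∑ k ∈ Finset.range N, a k • e R (j - k)}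

theorem smul_e_eq_zero (R : Type*) [CommRing R] (N : ℕ) (hN : 1 ≤ N)
    (a : ℕ → R) (x : R) (c : ℕ) (h0 : a 0 = x) (hdvd : ∀ k, k < c → x ∣ a k) :
    ∀ b, 1 ≤ b → b ≤ c →
      x • (Submodule.Quotient.mk (e R b) : (ℕ →₀ R) ⧸ relSub R N a) = 0 := by
  intro b
  induction b using Nat.strong_induction_on with
  | _ b ih =>
  intro hb1 hbc
  obtain ⟨m, rfl⟩ : ∃ m, N = m + 1 := ⟨N - 1, by omega⟩
  have hrel : ((Submodule.Quotient.mk (∑ k ∈ Finset.range (m + 1), a k • e R (b - k)) :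
      (ℕ →₀ R) ⧸ relSub R (m + 1) a)) = 0 := by
    rw [Submodule.Quotient.mk_eq_zero]
    exact Submodule.subset_span ⟨b, hb1, rfl⟩
  rw [show (∑ k ∈ Finset.range (m + 1), a k • e R (b - k)) =
      a 0 • e R b + ∑ i ∈ Finset.range m, a (i + 1) • e R (b - (i + 1)) by
    rw [Finset.sum_range_succ']; ring_nf; simp [add_comm]] at hrel
  rw [← Submodule.mkQ_apply, map_add, map_smul, map_sum] at hrel
  have hsum : (∑ i ∈ Finset.range m,
      (Submodule.mkQ (relSub R (m + 1) a)) (a (i + 1) • e R (b - (i + 1)))) = 0 := by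
    apply Finset.sum_eq_zero
    intro i _
    rcases Nat.eq_zero_or_pos (b - (i + 1)) with hz | hp
    · simp [e, hz]
    · have hlt : b - (i + 1) < b := by omega
      obtain ⟨y, hy⟩ := hdvd (i + 1) (by omega)
      rw [map_smul, hy, mul_comm, mul_smul, Submodule.mkQ_apply, ih _ hlt hp (by omega), smul_zero]
  rw [hsum, add_zero, h0] at hrel
  simpa using hrel
end

section
/- For a prime p, let R = Z_(p)[v] and let S ⊆ R be the subring Z_(p)[v^{p-1}]. Then the contraction to S of the ideal I = (p^2, p*v^{p-1}, v^{(p-1)(p+2)}) of R equals the ideal of S generated by p^2, p*w, and w^{p+2}, where w = v^{p-1}. -/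
open Polynomial

lemma mem_span_triple {R : Type*} [CommRing R] (a b : R) (hba : b ∣ a) (n m : ℕ)
    (hnm : n ≤ m) (g : R[X]) :
    g ∈ Ideal.span {C a, C b * X ^ n, (X : R[X]) ^ m} ↔
      (∀ i < n, a ∣ g.coeff i) ∧ (∀ i < m, b ∣ g.coeff i) := by
  constructor
  · intro hg
    refine Submodule.span_induction ?_ ?_ ?_ ?_ hg
    · rintro x (rfl | rfl | rfl)
      · constructor <;> intro i hi <;> simp only [coeff_C] <;> split <;>
          simp [hba]
      · constructor <;> intro i hi <;> simp only [coeff_C_mul, coeff_X_pow, mul_ite, mul_one, mul_zero] <;> split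
        · omega
        · simp
        · simp
        · simp
      · constructor <;> intro i hi <;> rw [coeff_X_pow] <;> split <;> first | omega | simp
    · simp
    · rintro x y _ _ ⟨hx1, hx2⟩ ⟨hy1, hy2⟩
      exact ⟨fun i hi => coeff_add x y i ▸ dvd_add (hx1 i hi) (hy1 i hi),
        fun i hi => coeff_add x y i ▸ dvd_add (hx2 i hi) (hy2 i hi)⟩
    · rintro q x _ ⟨hx1, hx2⟩
      constructor <;> intro i hi <;> rw [smul_eq_mul, coeff_mul] <;>
        refine Finset.dvd_sum fun jk hjk => Dvd.dvd.mul_left ?_ _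
      · exact hx1 jk.2 (by have := Finset.HasAntidiagonal.mem_antidiagonal.mp hjk; omega)
      · exact hx2 jk.2 (by have := Finset.HasAntidiagonal.mem_antidiagonal.mp hjk; omega)
  · rintro ⟨h1, h2⟩
    rw [g.as_sum_support]
    refine Ideal.sum_mem _ fun i hi => ?_
    rcases lt_or_ge i n with hin | hin
    · obtain ⟨d, hd⟩ := h1 i hin
      have : monomial i (g.coeff i) = (C d * X ^ i) * C a := by
        rw [hd, ← C_mul_X_pow_eq_monomial, C_mul]; ring
      rw [this]
      exact Ideal.mul_mem_left _ _ (Ideal.subset_span (by simp))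
    rcases lt_or_ge i m with him | him
    · obtain ⟨c, hc⟩ := h2 i him
      have key : C c * X ^ (i - n) * (C b * X ^ n) = C (b * c) * X ^ i := by
        calc C c * X ^ (i - n) * (C b * X ^ n) = C b * C c * (X ^ (i - n) * X ^ n) := by ring
        _ = C (b * c) * X ^ i := by rw [← pow_add, Nat.sub_add_cancel hin, ← C_mul]
      rw [← C_mul_X_pow_eq_monomial, hc, ← key]
      exact Ideal.mul_mem_left _ _ (Ideal.subset_span (by simp))
    · have : monomial i (g.coeff i) = (C (g.coeff i) * X ^ (i - m)) * X ^ m := by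
        rw [← C_mul_X_pow_eq_monomial, mul_assoc, ← pow_add, Nat.sub_add_cancel him]
      rw [this]
      exact Ideal.mul_mem_left _ _ (Ideal.subset_span (by simp))

theorem contraction_of_annihilator_ideal (p : ℕ) (hp : p.Prime) :
    haveI hP : (Ideal.span {(p : ℤ)}).IsPrime :=
      (Ideal.span_singleton_prime (by exact_mod_cast hp.ne_zero)).mpr
        (Nat.prime_iff_prime_int.mp hp)
    -- `Zp = ℤ_(p)`; the subring `S = ℤ_(p)[v^{p-1}] ⊆ ℤ_(p)[v]` is realized as the image
    -- of the map `φ : ℤ_(p)[w] → ℤ_(p)[v]`, `w ↦ v^{p-1}`, and the contraction `I ∩ S`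
    -- as the comap of `I` along `φ`.
    let Zp := Localization.AtPrime (Ideal.span {(p : ℤ)})
    let φ : Polynomial Zp →ₐ[Zp] Polynomial Zp :=
      Polynomial.aeval (Polynomial.X ^ (p - 1))
    let I : Ideal (Polynomial Zp) := Ideal.span
      {(p : Polynomial Zp) ^ 2, (p : Polynomial Zp) * Polynomial.X ^ (p - 1),
        Polynomial.X ^ ((p - 1) * (p + 2))}
    Ideal.comap φ I = Ideal.span
      {(p : Polynomial Zp) ^ 2, (p : Polynomial Zp) * Polynomial.X,
        Polynomial.X ^ (p + 2)} := by
  intro Zp φ I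
  have hq : 0 < p - 1 := by have := hp.two_le; omega
  set q := p - 1 with hqdef
  have hc2 : ((p : Zp[X])) ^ 2 = C ((p : Zp) ^ 2) := by rw [map_pow, map_natCast]
  have hc1 : ((p : Zp[X])) = C ((p : Zp)) := (map_natCast C p).symm
  have hba : (p : Zp) ∣ (p : Zp) ^ 2 := dvd_pow_self _ (by norm_num)
  have hφ : ∀ f : Zp[X], φ f = expand Zp q f := fun f => rfl
  ext f
  rw [Ideal.mem_comap, hφ]
  have hI : I = Ideal.span {C ((p : Zp) ^ 2), C ((p : Zp)) * X ^ q,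
      (X : Zp[X]) ^ (q * (p + 2))} := by
    rw [hqdef]; rw [← hc1, ← hc2]
  have hJ : Ideal.span {(p : Zp[X]) ^ 2, (p : Zp[X]) * X, (X : Zp[X]) ^ (p + 2)}
      = Ideal.span {C ((p : Zp) ^ 2), C ((p : Zp)) * X ^ 1, (X : Zp[X]) ^ (p + 2)} := by
    rw [← hc1, ← hc2, pow_one]
  rw [hI, hJ, mem_span_triple _ _ hba _ _ (by nlinarith),
    mem_span_triple _ _ hba _ _ (by omega)]
  constructor
  · rintro ⟨h1, h2⟩
    constructor
    · intro i hi
      have h0 := h1 0 hq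
      rw [coeff_expand hq, if_pos (dvd_zero q), Nat.zero_div] at h0
      have : i = 0 := by omega
      subst this; exact h0
    · intro j hj
      have h0 := h2 (q * j) (by exact Nat.mul_lt_mul_left hq |>.mpr hj)
      rw [coeff_expand hq] at h0
      rw [if_pos (dvd_mul_right q j), Nat.mul_div_cancel_left j hq] at h0
      exact h0
  · rintro ⟨h1, h2⟩
    constructor
    · intro i hi
      rw [coeff_expand hq]
      split
      · have h0 : i = 0 := Nat.eq_zero_of_dvd_of_lt ‹q ∣ i› hi
        subst h0
        simpa using h1 0 one_pos
      · exact dvd_zero _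
    · intro i hi
      rw [coeff_expand hq]
      split
      · exact h2 (i / q) (Nat.div_lt_of_lt_mul hi)
      · exact dvd_zero _
end
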